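/- Let Φ : ℚ^∞ → ℚ^∞ be the shift map. If A is a finite set with |A + Φ(A)| ≤ K|A|, then |A + Φ(A) + Φ(A) + Φ(A)| ≤ K^9|A|. -/

import Mathlib

/-!
Write `B = Φ(A)`, so that `|B| = |A|`. Plünnecke–Ruzsa turns `|A + B| ≤ K|A|` into
`|4B| ≤ K⁴|A|`, and Ruzsa's triangle inequality `|A + 3B||B| ≤ |A + B||B + 3B|` then gives
`|A + 3B| ≤ K⁵|A|`. Since `|A| ≤ |A + B|` forces `K ≥ 1`, this is at most `K⁹|A|`.
-/

open scoped Pointwise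

/-- The shift map `e_k ↦ e_{k+1}` on finitely supported rational sequences. -/
noncomputable def shiftMap : (ℕ →₀ ℚ) → (ℕ →₀ ℚ) :=
  Finsupp.embDomain ⟨Nat.succ, Nat.succ_injective⟩

open Finset

theorem shiftMap_injective : Function.Injective shiftMap :=
  Finsupp.embDomain_injective _

namespace Finset

variable {G : Type*} [AddCommGroup G] [DecidableEq G] {A B : Finset G} {K : ℝ}

theorem one_le_of_card_add_le (hA : A.Nonempty) (hB : B.Nonempty)
    (h : (#(A + B) : ℝ) ≤ K * #A) : 1 ≤ K := by
  have hA_pos : (0 : ℝ) < #A := by exact_mod_cast hA.card_pos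
  have hA_le : (#A : ℝ) ≤ #(A + B) := by exact_mod_cast card_le_card_add_right hB
  exact le_of_mul_le_mul_right (by linarith) hA_pos

theorem card_nsmul_le_of_card_add_le (hA : A.Nonempty) (h : (#(A + B) : ℝ) ≤ K * #A) (n : ℕ) :
    (#(n • B) : ℝ) ≤ K ^ n * #A := by
  have hdoubling : (#(A + B) / #A : ℝ) ≤ K := by
    rwa [div_le_iff₀ (by exact_mod_cast hA.card_pos)]
  calc (#(n • B) : ℝ) ≤ (#(A + B) / #A : ℝ) ^ n * #A := by
        simpa using (NNRat.cast_le (K := ℝ)).2 (pluennecke_ruzsa_inequality_nsmul_add hA B n)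
    _ ≤ K ^ n * #A := by gcongr

theorem card_add_add_add_le_of_card_add_le (hA : A.Nonempty) (hcard : #B = #A)
    (h : (#(A + B) : ℝ) ≤ K * #A) : (#(A + B + B + B) : ℝ) ≤ K ^ 5 * #A := by
  have hA_pos : (0 : ℝ) < #A := by exact_mod_cast hA.card_pos
  have hfour : B + (B + B + B) = 4 • B := by
    simp only [succ_nsmul, zero_nsmul, zero_add, add_assoc]
  have hK : 0 ≤ K * #A := h.trans' (by positivity)
  have hruzsa : (#(A + B + B + B) : ℝ) * #A ≤ (K * #A) * (K ^ 4 * #A) :=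
    calc (#(A + B + B + B) : ℝ) * #A = #(A + (B + B + B)) * #B := by
          rw [hcard]; simp only [add_assoc]
      _ ≤ #(A + B) * #(4 • B) := by
          rw [← hfour]; exact_mod_cast ruzsa_triangle_inequality_add_add_add A B (B + B + B)
      _ ≤ (K * #A) * (K ^ 4 * #A) :=
          mul_le_mul h (card_nsmul_le_of_card_add_le hA h 4) (by positivity) hK
  exact le_of_mul_le_mul_right (by linarith) hA_pos

end Finset

theorem triple_shift_sum_bound (A : Finset (ℕ →₀ ℚ)) (K : ℝ)
    (h : ((A + A.image shiftMap).card : ℝ) ≤ K * A.card) :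
    ((A + A.image shiftMap + A.image shiftMap + A.image shiftMap).card : ℝ) ≤
      K ^ 9 * A.card := by
  obtain rfl | hA := A.eq_empty_or_nonempty
  · simp
  have hcard : #(A.image shiftMap) = #A := card_image_of_injective _ shiftMap_injective
  have hK : 1 ≤ K := one_le_of_card_add_le hA (hA.image _) h
  calc _ ≤ K ^ 5 * #A := card_add_add_add_le_of_card_add_le hA hcard h
    _ ≤ K ^ 9 * #A := by gcongr; norm_num
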